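/- For each α ∈ J, the α-grounding coreflection: given any object V of C, the object V' with V'_γ = V_γ for γ ≤ α and V'_β = v_{α,β}(V_α)·k_β (the k_β-span of the image of v_{α,β}) for β > α, with restricted transition maps, is α-grounded, and the inclusion V' → V is universal: every morphism U → V from an α-grounded object U factors uniquely through V' → V. Hence α-G is a coreflective subcategory of C. -/
import Mathlib

set_option linter.unusedVariables false

structure ChainObj {J : Type} [LinearOrder J] (k : J → Type) [∀ i, Field (k i)]
    (f : ∀ i j, i ≤ j → k i →+* k j) where
  V : J → Type
  [acg : ∀ i, AddCommGroup (V i)]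
  [mod : ∀ i, Module (k i) (V i)]
  t : ∀ i j (h : i ≤ j), V i →ₛₗ[f i j h] V j
  t_id : ∀ i (x : V i), t i i le_rfl x = x
  t_comp : ∀ i j l (h₁ : i ≤ j) (h₂ : j ≤ l) (x : V i),
    t j l h₂ (t i j h₁ x) = t i l (h₁.trans h₂) x

attribute [instance] ChainObj.acg ChainObj.mod

variable {J : Type} [LinearOrder J] {k : J → Type} [∀ i, Field (k i)]
  {f : ∀ i j, i ≤ j → k i →+* k j}

@[ext]
structure ChainHom (V W : ChainObj k f) where
  app : ∀ i, V.V i →ₗ[k i] W.V i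
  comm : ∀ i j (h : i ≤ j) (x : V.V i), W.t i j h (app i x) = app j (V.t i j h x)

def ChainHom.comp {U V W : ChainObj k f} (g : ChainHom V W) (h : ChainHom U V) :
    ChainHom U W where
  app i := (g.app i).comp (h.app i)
  comm i j hij x := by simp [g.comm, h.comm]

def ChainHom.id (V : ChainObj k f) : ChainHom V V where
  app i := LinearMap.id
  comm i j hij x := rfl

def ChainHom.zero (V W : ChainObj k f) : ChainHom V W where
  app i := 0
  comm i j hij x := by simp

/-- An object `V` is `α`-grounded if for every `β > α` the component `V β` is spanned
over `k β` by the image of the transition map from level `α`. -/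
def IsGrounded (α : J) (V : ChainObj k f) : Prop :=
  ∀ β (h : α < β), Submodule.span (k β) (Set.range (V.t α β h.le)) = ⊤

/-- The `α`-grounding of an object `V`: the components in degrees `≤ α` are unchanged
(as the full submodule), and for `β > α` the component is replaced by the `k β`-span of
the image of `V α`. -/
def groundObj (α : J) (V : ChainObj k f) : ChainObj k f where
  V i := Submodule.span (k i) (Set.range (V.t (min α i) i (min_le_right α i)))
  t i j h := LinearMap.codRestrict _ ((V.t i j h).domRestrict _)
    (fun c => by
      obtain ⟨x, hx⟩ := c
      simp only [LinearMap.domRestrict_apply]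
      refine Submodule.span_induction ?_ ?_ ?_ ?_ hx
      · rintro _ ⟨y, rfl⟩
        rw [V.t_comp]
        rw [← V.t_comp (min α i) (min α j) j (min_le_min le_rfl h) (min_le_right α j)]
        exact Submodule.subset_span ⟨_, rfl⟩
      · simp
      · intro a b _ _ ha hb
        rw [map_add]
        exact Submodule.add_mem _ ha hb
      · intro c a _ ha
        rw [LinearMap.map_smulₛₗ]
        exact Submodule.smul_mem _ _ ha)
  t_id i x := by apply Subtype.ext; simp [V.t_id]
  t_comp i j l h₁ h₂ x := by apply Subtype.ext; simp [V.t_comp]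

/-- The inclusion of the `α`-grounding of `V` into `V`. -/
def groundIncl (α : J) (V : ChainObj k f) : ChainHom (groundObj α V) V where
  app i := Submodule.subtype _
  comm i j h x := rfl

/-- The pointwise product of a family of objects of `C`. -/
def prodObj {I : Type} (Vf : I → ChainObj k f) : ChainObj k f where
  V i := ∀ x, (Vf x).V i
  t i j h :=
    { toFun := fun v x => (Vf x).t i j h (v x)
      map_add' := fun a b => funext fun x => by simp
      map_smul' := fun c a => funext fun x => by simp }
  t_id i v := funext fun x => (Vf x).t_id i (v x)
  t_comp i j l h₁ h₂ v := funext fun x => (Vf x).t_comp i j l h₁ h₂ (v x)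

/-- The canonical projection from the pointwise product onto a factor. -/
def prodProj {I : Type} (Vf : I → ChainObj k f) (x : I) :
    ChainHom (prodObj Vf) (Vf x) where
  app i := LinearMap.proj x
  comm i j h v := rfl

theorem topSpanAux (V : ChainObj k f) {i j : J} (h1 : i ≤ j) (h2 : j ≤ i) :
    Submodule.span (k j) (Set.range (V.t i j h1)) = ⊤ := by
  cases le_antisymm h1 h2
  rw [Submodule.eq_top_iff']
  intro x
  exact Submodule.subset_span ⟨x, V.t_id i x⟩

theorem memGroundAux (α : J) (V : ChainObj k f) {i : J} (hαi : α ≤ i) (w : V.V α) :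
    V.t α i hαi w ∈
      Submodule.span (k i) (Set.range (V.t (min α i) i (min_le_right α i))) := by
  refine Submodule.subset_span ⟨V.t α (min α i) (le_min le_rfl hαi) w, ?_⟩
  rw [V.t_comp]

theorem memGroundAll (α : J) (U V : ChainObj k f) (hU : IsGrounded α U)
    (ψ : ChainHom U V) (i : J) (x : U.V i) :
    ψ.app i x ∈
      Submodule.span (k i) (Set.range (V.t (min α i) i (min_le_right α i))) := by
  rcases le_or_gt i α with h | h
  · rw [topSpanAux V (min_le_right α i) (le_min h le_rfl)]
    trivial
  · have hx : x ∈ Submodule.span (k i) (Set.range (U.t α i h.le)) := by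
      rw [hU i h]; trivial
    refine Submodule.span_induction ?_ ?_ ?_ ?_ hx
    · rintro _ ⟨y, rfl⟩
      rw [← ψ.comm]
      exact memGroundAux α V h.le (ψ.app α y)
    · simp
    · intro a b _ _ ha hb
      rw [map_add]; exact Submodule.add_mem _ ha hb
    · intro c a _ ha
      rw [map_smul]; exact Submodule.smul_mem _ _ ha

/-- The `α`-grounding coreflection: `groundObj α V` agrees with `V` in degrees `≤ α`
(the span is everything there), it is `α`-grounded, and the inclusion
`groundObj α V → V` is universal among morphisms to `V` from `α`-grounded objects;
hence `α`-G is a coreflective subcategory of `C`. -/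
theorem stmt12 (α : J) (V : ChainObj k f) :
    (∀ γ, γ ≤ α →
      Submodule.span (k γ) (Set.range (V.t (min α γ) γ (min_le_right α γ))) = ⊤) ∧
    IsGrounded α (groundObj α V) ∧
    ∀ (U : ChainObj k f), IsGrounded α U → ∀ ψ : ChainHom U V,
      ∃! χ : ChainHom U (groundObj α V), (groundIncl α V).comp χ = ψ := by
  refine ⟨fun γ hγ => topSpanAux V _ (le_min hγ le_rfl), ?_, ?_⟩
  · intro β hβ
    rw [Submodule.eq_top_iff']
    rintro ⟨x, hx⟩
    refine Submodule.span_induction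
      (p := fun x hx => (⟨x, hx⟩ : (groundObj α V).V β) ∈
        Submodule.span (k β) (Set.range ((groundObj α V).t α β hβ.le))) ?_ ?_ ?_ ?_ hx
    · rintro _ ⟨y, rfl⟩
      have hz : V.t (min α β) α (min_le_left α β) y ∈
          Submodule.span (k α) (Set.range (V.t (min α α) α (min_le_right α α))) := by
        rw [topSpanAux V (min_le_right α α) (le_min le_rfl le_rfl)]; trivial
      refine Submodule.subset_span ⟨⟨_, hz⟩, ?_⟩
      apply Subtype.ext
      exact V.t_comp _ _ _ _ _ y
    · exact Submodule.zero_mem _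
    · intro a b ha hb iha ihb
      exact Submodule.add_mem _ iha ihb
    · intro c a ha iha
      exact Submodule.smul_mem _ _ iha
  · intro U hU ψ
    refine ⟨⟨fun i => LinearMap.codRestrict _ (ψ.app i)
        (fun x => memGroundAll α U V hU ψ i x), fun i j h x => ?_⟩, ?_, ?_⟩
    · apply Subtype.ext
      exact ψ.comm i j h x
    · apply ChainHom.ext
      funext i
      rfl
    · rintro χ' hχ'
      apply ChainHom.ext
      funext i
      apply LinearMap.ext
      intro x
      apply Subtype.ext
      exact congrFun (congrArg (fun g => (ChainHom.app g i).toFun) hχ') x
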